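/- arXiv:2207.12506 — 5 statements merged into one kernel-verified Lean document; each statement's English description precedes it below -/
import Mathlib

section
/- Let f₁, f₂ : ℝ → ℝ be differentiable probability densities that are strictly positive on ℝ, and suppose the Fisher informations I(f_i) = ∫_ℝ f_i'(x)²/f_i(x) dx are finite (the integrands being integrable). Then for every w ∈ [0,1], the mixture f = w f₁ + (1−w) f₂ satisfies I(f) = ∫_ℝ f'(x)²/f(x) dx ≤ w I(f₁) + (1−w) I(f₂); i.e., the Fisher information functional I(f) = ∫ (f')²/f is convex under linear (mixture) pooling. -/
open MeasureTheory

lemma fisher_pointwise (a b c d : ℝ) (hc : 0 < c) (hd : 0 < d) (w : ℝ)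
    (hw0 : 0 ≤ w) (hw1 : w ≤ 1) :
    (w * a + (1 - w) * b) ^ 2 / (w * c + (1 - w) * d)
      ≤ w * (a ^ 2 / c) + (1 - w) * (b ^ 2 / d) := by
  rcases eq_or_lt_of_le hw0 with h0 | h0
  · simp [← h0]
  rcases eq_or_lt_of_le hw1 with h1 | h1
  · simp [h1]
  have hw1' : 0 < 1 - w := by linarith
  have hden : 0 < w * c + (1 - w) * d := by positivity
  rw [div_le_iff₀ hden, mul_div_assoc', mul_div_assoc',
    div_add_div _ _ hc.ne' hd.ne', div_mul_eq_mul_div, le_div_iff₀ (by positivity)]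
  nlinarith [mul_nonneg (mul_nonneg h0.le hw1'.le) (sq_nonneg (a * d - b * c)),
    mul_pos hc hd, sq_nonneg (a * d - b * c),
    mul_pos (mul_pos h0 hw1') (mul_pos hc hd)]

/-- Convexity of the Fisher information under mixture pooling: for differentiable,
strictly positive probability densities `f₁, f₂` on `ℝ` with finite Fisher
informations, and any `w ∈ [0,1]`, the mixture `f = w f₁ + (1−w) f₂` satisfies
`I(f) ≤ w I(f₁) + (1−w) I(f₂)`, where `I(f) = ∫ (f')²/f`. -/
theorem fisher_information_convex_mixture (f₁ f₂ : ℝ → ℝ)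
    (hd₁ : Differentiable ℝ f₁) (hd₂ : Differentiable ℝ f₂)
    (hpos₁ : ∀ x, 0 < f₁ x) (hpos₂ : ∀ x, 0 < f₂ x)
    (hint₁ : Integrable f₁) (hint₂ : Integrable f₂)
    (hone₁ : ∫ x, f₁ x = 1) (hone₂ : ∫ x, f₂ x = 1)
    (hI₁ : Integrable (fun x => (deriv f₁ x) ^ 2 / f₁ x))
    (hI₂ : Integrable (fun x => (deriv f₂ x) ^ 2 / f₂ x))
    (w : ℝ) (hw : w ∈ Set.Icc (0 : ℝ) 1) :
    (∫ x, (deriv (fun y => w * f₁ y + (1 - w) * f₂ y) x) ^ 2 /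
        (w * f₁ x + (1 - w) * f₂ x)) ≤
      w * (∫ x, (deriv f₁ x) ^ 2 / f₁ x) + (1 - w) * (∫ x, (deriv f₂ x) ^ 2 / f₂ x) := by
  obtain ⟨hw0, hw1⟩ := hw
  have hderiv : ∀ x, deriv (fun y => w * f₁ y + (1 - w) * f₂ y) x
      = w * deriv f₁ x + (1 - w) * deriv f₂ x := by
    intro x
    rw [deriv_fun_add ((hd₁ x).const_mul w) ((hd₂ x).const_mul (1 - w)),
      deriv_const_mul w (hd₁ x), deriv_const_mul (1 - w) (hd₂ x)]
  have hptw : ∀ x,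
      (deriv (fun y => w * f₁ y + (1 - w) * f₂ y) x) ^ 2 /
        (w * f₁ x + (1 - w) * f₂ x)
      ≤ w * ((deriv f₁ x) ^ 2 / f₁ x) + (1 - w) * ((deriv f₂ x) ^ 2 / f₂ x) := by
    intro x
    rw [hderiv x]
    exact fisher_pointwise _ _ _ _ (hpos₁ x) (hpos₂ x) w hw0 hw1
  have hintR : Integrable (fun x =>
      w * ((deriv f₁ x) ^ 2 / f₁ x) + (1 - w) * ((deriv f₂ x) ^ 2 / f₂ x)) :=
    (hI₁.const_mul w).add (hI₂.const_mul (1 - w))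
  have hle : (∫ x, (deriv (fun y => w * f₁ y + (1 - w) * f₂ y) x) ^ 2 /
        (w * f₁ x + (1 - w) * f₂ x))
      ≤ ∫ x, (w * ((deriv f₁ x) ^ 2 / f₁ x) + (1 - w) * ((deriv f₂ x) ^ 2 / f₂ x)) := by
    apply integral_mono_of_nonneg
    · filter_upwards with x
      have hden : 0 < w * f₁ x + (1 - w) * f₂ x := by
        rcases eq_or_lt_of_le hw0 with h0 | h0
        · simp [← h0]; nlinarith [hpos₂ x]
        rcases eq_or_lt_of_le hw1 with h1 | h1
        · simp [h1]; nlinarith [hpos₁ x]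
        nlinarith [mul_pos h0 (hpos₁ x), mul_pos (show (0:ℝ) < 1 - w by linarith) (hpos₂ x)]
      exact div_nonneg (sq_nonneg _) hden.le
    · exact hintR
    · filter_upwards with x using hptw x
  calc _ ≤ _ := hle
    _ = w * (∫ x, (deriv f₁ x) ^ 2 / f₁ x) + (1 - w) * (∫ x, (deriv f₂ x) ^ 2 / f₂ x) := by
        rw [integral_add (hI₁.const_mul w) (hI₂.const_mul (1 - w)),
          integral_const_mul, integral_const_mul]
end

section
/- Let p and q be probability densities on ℝ (nonnegative, measurable, each integrating to 1), and suppose q(x) = exp(∑_{j=1}^M λ_j g_j(x)) for all x, for some real constants λ_1, …, λ_M and measurable functions g_1, …, g_M. Assume that for each j the functions g_j·p and g_j·q are integrable with ∫_ℝ g_j(x) p(x) dx = ∫_ℝ g_j(x) q(x) dx, and that p log p, p log q, and q log q are integrable. Then ∫_ℝ q(x) log q(x) dx ≤ ∫_ℝ p(x) log p(x) dx; i.e., among all densities satisfying the linear constraints, the exponential-form density q minimizes the information ∫ p log p (maximum entropy principle). -/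
open MeasureTheory

/-- Maximum entropy (minimum information) principle: if `p` and `q` are probability
densities on `ℝ`, `q(x) = exp(∑ⱼ λⱼ gⱼ(x))`, and `p` and `q` satisfy the same linear
constraints `∫ gⱼ p = ∫ gⱼ q` (with the stated integrability assumptions), then
`∫ q log q ≤ ∫ p log p`. -/
theorem max_entropy_exponential_form {M : ℕ}
    (p q : ℝ → ℝ) (g : Fin M → ℝ → ℝ) (lam : Fin M → ℝ)
    (hp0 : ∀ x, 0 ≤ p x) (hq0 : ∀ x, 0 ≤ q x)
    (hpm : Measurable p) (hqm : Measurable q) (hgm : ∀ j, Measurable (g j))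
    (hpi : Integrable p) (hqi : Integrable q)
    (hp1 : ∫ x, p x = 1) (hq1 : ∫ x, q x = 1)
    (hqform : ∀ x, q x = Real.exp (∑ j, lam j * g j x))
    (hgp : ∀ j, Integrable (fun x => g j x * p x))
    (hgq : ∀ j, Integrable (fun x => g j x * q x))
    (hcon : ∀ j, (∫ x, g j x * p x) = ∫ x, g j x * q x)
    (hplp : Integrable (fun x => p x * Real.log (p x)))
    (hplq : Integrable (fun x => p x * Real.log (q x)))
    (hqlq : Integrable (fun x => q x * Real.log (q x))) :
    (∫ x, q x * Real.log (q x)) ≤ ∫ x, p x * Real.log (p x) := by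
  have hlogq : ∀ x, Real.log (q x) = ∑ j, lam j * g j x := fun x => by
    rw [hqform x, Real.log_exp]
  -- ∫ p log q = ∫ q log q  via the linear constraints
  have key : ∀ (f : ℝ → ℝ), (∀ j, Integrable (fun x => g j x * f x)) →
      (∫ x, f x * Real.log (q x)) = ∑ j, lam j * ∫ x, g j x * f x := by
    intro f hf
    have : (∫ x, f x * Real.log (q x)) = ∫ x, ∑ j, lam j * (g j x * f x) := by
      congr 1; funext x
      rw [hlogq x, Finset.mul_sum]
      exact Finset.sum_congr rfl fun j _ => by ring
    rw [this, integral_finset_sum]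
    · congr 1; funext j; rw [integral_const_mul]
    · intro j _; exact (hf j).const_mul _
  have hEq : (∫ x, p x * Real.log (q x)) = ∫ x, q x * Real.log (q x) := by
    rw [key p hgp, key q hgq]
    exact Finset.sum_congr rfl fun j _ => by rw [hcon j]
  -- pointwise Gibbs inequality
  have hpt : ∀ x, p x - q x ≤ p x * Real.log (p x) - p x * Real.log (q x) := by
    intro x
    have hq' : 0 < q x := by rw [hqform x]; exact Real.exp_pos _
    rcases eq_or_lt_of_le (hp0 x) with h | hp'
    · simp [← h]; linarith
    · have hlog : Real.log (q x / p x) ≤ q x / p x - 1 :=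
        Real.log_le_sub_one_of_pos (div_pos hq' hp')
      rw [Real.log_div (ne_of_gt hq') (ne_of_gt hp')] at hlog
      have h2 := mul_le_mul_of_nonneg_left hlog (le_of_lt hp')
      have h3 : p x * (q x / p x - 1) = q x - p x := by field_simp
      nlinarith
  -- integrate
  have hint : (∫ x, p x) - (∫ x, q x) ≤
      (∫ x, p x * Real.log (p x)) - ∫ x, p x * Real.log (q x) := by
    rw [← integral_sub hpi hqi, ← integral_sub hplp hplq]
    exact integral_mono (hpi.sub hqi) (hplp.sub hplq) fun x => hpt x
  rw [hp1, hq1, hEq] at hint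
  linarith
end

section
/- Let ψ_i(x) = (2π σ_i²)^{-1/4} exp(−(x−μ_i)²/(4σ_i²)) and ψ_j(x) = (2π σ_j²)^{-1/4} exp(−(x−μ_j)²/(4σ_j²)) be square roots of normal densities, with derivatives ψ_i'(x) = −((x−μ_i)/(2σ_i²)) ψ_i(x) and similarly for ψ_j'. Setting a = 1/σ_i² + 1/σ_j² and b = μ_i/σ_i² + μ_j/σ_j², one has ∫_ℝ ψ_i'(x) ψ_j'(x) dx = (⟨ψ_i, ψ_j⟩ / (4 σ_i² σ_j²)) · ( 2/a + b²/a² − b(μ_i + μ_j)/a + μ_i μ_j ), where ⟨ψ_i, ψ_j⟩ = ∫_ℝ ψ_i(x) ψ_j(x) dx. -/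
open MeasureTheory Real

lemma integrable_sq_mul_exp {b : ℝ} (hb : 0 < b) :
    Integrable (fun x : ℝ => x ^ 2 * Real.exp (-b * x ^ 2)) := by
  have := integrable_rpow_mul_exp_neg_mul_sq hb (by norm_num : (-1:ℝ) < 2)
  simpa [Real.rpow_natCast] using this

lemma gauss1 {b : ℝ} (hb : 0 < b) :
    (∫ x : ℝ, x * Real.exp (-b * x ^ 2)) = 0 := by
  have hderiv : ∀ x : ℝ, HasDerivAt (fun x : ℝ => -(1/(2*b)) * Real.exp (-b * x ^ 2))
      (x * Real.exp (-b * x ^ 2)) x := by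
    intro x
    have h1 : HasDerivAt (fun x : ℝ => -b * x ^ 2) (-b * (2 * x)) x := by
      simpa using (hasDerivAt_pow 2 x).const_mul (-b)
    have h2 := (h1.exp).const_mul (-(1/(2*b)))
    refine h2.congr_deriv ?_
    field_simp
  exact integral_eq_zero_of_hasDerivAt_of_integrable hderiv
    (integrable_mul_exp_neg_mul_sq hb)
    ((integrable_exp_neg_mul_sq hb).const_mul _)

lemma gauss2 {b : ℝ} (hb : 0 < b) :
    (∫ x : ℝ, x ^ 2 * Real.exp (-b * x ^ 2)) = (1/(2*b)) * Real.sqrt (Real.pi / b) := by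
  have hderiv : ∀ x : ℝ, HasDerivAt (fun x : ℝ => -(x/(2*b)) * Real.exp (-b * x ^ 2))
      (x ^ 2 * Real.exp (-b * x ^ 2) - (1/(2*b)) * Real.exp (-b * x ^ 2)) x := by
    intro x
    have h1 : HasDerivAt (fun x : ℝ => -b * x ^ 2) (-b * (2 * x)) x := by
      simpa using (hasDerivAt_pow 2 x).const_mul (-b)
    have h2 : HasDerivAt (fun x : ℝ => -(x/(2*b))) (-(1/(2*b))) x := by
      exact ((hasDerivAt_id x).div_const (2*b)).neg
    have h3 := h2.mul h1.exp
    refine h3.congr_deriv ?_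
    field_simp
    ring
  have hint : Integrable (fun x : ℝ =>
      x ^ 2 * Real.exp (-b * x ^ 2) - (1/(2*b)) * Real.exp (-b * x ^ 2)) :=
    (integrable_sq_mul_exp hb).sub ((integrable_exp_neg_mul_sq hb).const_mul _)
  have hF : Integrable (fun x : ℝ => -(x/(2*b)) * Real.exp (-b * x ^ 2)) := by
    have := (integrable_mul_exp_neg_mul_sq hb).const_mul (-(1/(2*b)))
    convert this using 2 with x
    ring
  have h0 := integral_eq_zero_of_hasDerivAt_of_integrable hderiv hint hF
  rw [integral_sub (integrable_sq_mul_exp hb) ((integrable_exp_neg_mul_sq hb).const_mul _),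
    MeasureTheory.integral_const_mul, integral_gaussian, sub_eq_zero] at h0
  exact h0




/-- Inner product of the derivatives of square roots of two normal densities: with
`ψᵢ'(x) = −((x−μᵢ)/(2σᵢ²)) ψᵢ(x)` (and similarly for `ψⱼ`), `a = 1/σᵢ² + 1/σⱼ²` and
`b = μᵢ/σᵢ² + μⱼ/σⱼ²`, one has
`∫ ψᵢ' ψⱼ' = (⟨ψᵢ, ψⱼ⟩/(4 σᵢ² σⱼ²)) (2/a + b²/a² − b(μᵢ+μⱼ)/a + μᵢ μⱼ)`. -/
theorem normal_sqrt_density_deriv_inner_product (μi μj σi σj : ℝ)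
    (hσi : 0 < σi) (hσj : 0 < σj)
    (ψi ψj ψi' ψj' : ℝ → ℝ)
    (hψi : ψi = fun x =>
      (2 * Real.pi * σi ^ 2) ^ (-(1 / 4 : ℝ)) * Real.exp (-(x - μi) ^ 2 / (4 * σi ^ 2)))
    (hψj : ψj = fun x =>
      (2 * Real.pi * σj ^ 2) ^ (-(1 / 4 : ℝ)) * Real.exp (-(x - μj) ^ 2 / (4 * σj ^ 2)))
    (hψi' : ψi' = fun x => -((x - μi) / (2 * σi ^ 2)) * ψi x)
    (hψj' : ψj' = fun x => -((x - μj) / (2 * σj ^ 2)) * ψj x)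
    (a b : ℝ)
    (ha : a = 1 / σi ^ 2 + 1 / σj ^ 2)
    (hb : b = μi / σi ^ 2 + μj / σj ^ 2) :
    (∫ x : ℝ, ψi' x * ψj' x) =
      ((∫ x : ℝ, ψi x * ψj x) / (4 * σi ^ 2 * σj ^ 2)) *
        (2 / a + b ^ 2 / a ^ 2 - b * (μi + μj) / a + μi * μj) := by
  have hsi : (0:ℝ) < σi ^ 2 := by positivity
  have hsj : (0:ℝ) < σj ^ 2 := by positivity
  have ha0 : 0 < a := by rw [ha]; positivity
  have hb4 : 0 < a / 4 := by linarith
  set m : ℝ := b / a with hm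
  set K : ℝ := (2 * Real.pi * σi ^ 2) ^ (-(1 / 4 : ℝ)) * (2 * Real.pi * σj ^ 2) ^ (-(1 / 4 : ℝ)) *
      Real.exp ((b ^ 2 / a - μi ^ 2 / σi ^ 2 - μj ^ 2 / σj ^ 2) / 4) with hK
  -- product of the two wave functions is a shifted gaussian
  have hprod : ∀ x : ℝ, ψi x * ψj x = K * Real.exp (-(a/4) * (x - m) ^ 2) := by
    intro x
    rw [hψi, hψj]
    simp only
    have hexp : -(x - μi) ^ 2 / (4 * σi ^ 2) + -(x - μj) ^ 2 / (4 * σj ^ 2)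
        = (b ^ 2 / a - μi ^ 2 / σi ^ 2 - μj ^ 2 / σj ^ 2) / 4 + -(a/4) * (x - m) ^ 2 := by
      rw [hm, ha, hb]
      have h1 : (1 / σi ^ 2 + 1 / σj ^ 2 : ℝ) ≠ 0 := by positivity
      field_simp
      ring
    have h2 : Real.exp (-(x - μi) ^ 2 / (4 * σi ^ 2)) * Real.exp (-(x - μj) ^ 2 / (4 * σj ^ 2))
        = Real.exp ((b ^ 2 / a - μi ^ 2 / σi ^ 2 - μj ^ 2 / σj ^ 2) / 4)
          * Real.exp (-(a/4) * (x - m) ^ 2) := by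
      rw [← Real.exp_add, ← Real.exp_add, hexp]
    rw [hK]
    linear_combination ((2 * Real.pi * σi ^ 2) ^ (-(1 / 4 : ℝ)) *
      (2 * Real.pi * σj ^ 2) ^ (-(1 / 4 : ℝ))) * h2
  have hS : (∫ x : ℝ, Real.exp (-(a/4) * x ^ 2)) = Real.sqrt (Real.pi / (a/4)) :=
    integral_gaussian (a/4)
  set S : ℝ := Real.sqrt (Real.pi / (a/4)) with hSdef
  set p : ℝ := 2 * m - μi - μj with hp
  set q : ℝ := (m - μi) * (m - μj) with hq
  -- the integral of the product
  have hIP : (∫ x : ℝ, ψi x * ψj x) = K * S := by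
    have : (∫ x : ℝ, ψi x * ψj x) = ∫ x : ℝ, K * Real.exp (-(a/4) * (x - m) ^ 2) := by
      congr 1; funext x; exact hprod x
    rw [this]
    rw [show (fun x : ℝ => K * Real.exp (-(a/4) * (x - m) ^ 2))
        = (fun x : ℝ => (fun y : ℝ => K * Real.exp (-(a/4) * y ^ 2)) (x - m)) from rfl,
      MeasureTheory.integral_sub_right_eq_self (fun y : ℝ => K * Real.exp (-(a/4) * y ^ 2)) m,
      MeasureTheory.integral_const_mul, hS]
  -- the integral of the derivatives
  have hLHS : (∫ x : ℝ, ψi' x * ψj' x)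
      = (K / (4 * σi ^ 2 * σj ^ 2)) * ((2/a) * S + q * S) := by
    have h1 : (∫ x : ℝ, ψi' x * ψj' x)
        = ∫ x : ℝ, (fun y : ℝ => (K / (4 * σi ^ 2 * σj ^ 2)) *
            (y ^ 2 * Real.exp (-(a/4) * y ^ 2) + (p * (y * Real.exp (-(a/4) * y ^ 2))
              + q * Real.exp (-(a/4) * y ^ 2)))) (x - m) := by
      congr 1; funext x
      rw [hψi', hψj']
      simp only
      rw [show -((x - μi) / (2 * σi ^ 2)) * ψi x * (-((x - μj) / (2 * σj ^ 2)) * ψj x)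
          = ((x - μi) * (x - μj)) / (4 * σi ^ 2 * σj ^ 2) * (ψi x * ψj x) by ring,
        hprod x]
      rw [hp, hq]
      ring_nf
    rw [h1, MeasureTheory.integral_sub_right_eq_self
      (fun y : ℝ => (K / (4 * σi ^ 2 * σj ^ 2)) *
        (y ^ 2 * Real.exp (-(a/4) * y ^ 2) + (p * (y * Real.exp (-(a/4) * y ^ 2))
          + q * Real.exp (-(a/4) * y ^ 2)))) m, MeasureTheory.integral_const_mul]
    have hadd : (∫ y : ℝ, (y ^ 2 * Real.exp (-(a/4) * y ^ 2) + (p * (y * Real.exp (-(a/4) * y ^ 2))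
          + q * Real.exp (-(a/4) * y ^ 2))))
        = (∫ y : ℝ, y ^ 2 * Real.exp (-(a/4) * y ^ 2))
          + ((∫ y : ℝ, p * (y * Real.exp (-(a/4) * y ^ 2)))
            + (∫ y : ℝ, q * Real.exp (-(a/4) * y ^ 2))) := by
      have hg : Integrable (fun y : ℝ => p * (y * Real.exp (-(a/4) * y ^ 2))
          + q * Real.exp (-(a/4) * y ^ 2)) :=
        ((integrable_mul_exp_neg_mul_sq hb4).const_mul p).add
          ((integrable_exp_neg_mul_sq hb4).const_mul q)
      rw [integral_add (integrable_sq_mul_exp hb4) hg,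
        integral_add ((integrable_mul_exp_neg_mul_sq hb4).const_mul p)
          ((integrable_exp_neg_mul_sq hb4).const_mul q)]
    rw [hadd, MeasureTheory.integral_const_mul, MeasureTheory.integral_const_mul,
      gauss1 hb4, gauss2 hb4, hS]
    have : (1 / (2 * (a/4)) : ℝ) = 2 / a := by
      field_simp
      ring
    rw [this]
    ring
  rw [hLHS, hIP]
  have hq' : q = b ^ 2 / a ^ 2 - b * (μi + μj) / a + μi * μj := by
    rw [hq, hm]
    field_simp
    ring
  rw [hq']
  field_simp
  ring
end

section
/- Let a_i, b_i, a_j, b_j > 0 and let g_i(x) = (b_i^{a_i}/Γ(a_i)) x^{a_i−1} e^{−b_i x} and g_j(x) = (b_j^{a_j}/Γ(a_j)) x^{a_j−1} e^{−b_j x} be Gamma densities on (0,∞). Then ∫₀^∞ √(g_i(x)) √(g_j(x)) dx = ( b_i^{a_i/2} b_j^{a_j/2} / (Γ(a_i)^{1/2} Γ(a_j)^{1/2}) ) · Γ((a_i+a_j)/2) / ((b_i+b_j)/2)^{(a_i+a_j)/2}. -/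
/-- Inner product of square roots of two Gamma densities:
`∫₀^∞ √gᵢ √gⱼ = (bᵢ^{aᵢ/2} bⱼ^{aⱼ/2}/(Γ(aᵢ)^{1/2} Γ(aⱼ)^{1/2}))
  · Γ((aᵢ+aⱼ)/2) / ((bᵢ+bⱼ)/2)^{(aᵢ+aⱼ)/2}`. -/
theorem gamma_sqrt_density_inner_product (ai bi aj bj : ℝ)
    (hai : 0 < ai) (hbi : 0 < bi) (haj : 0 < aj) (hbj : 0 < bj) :
    (∫ x in Set.Ioi (0 : ℝ),
        Real.sqrt (bi ^ ai / Real.Gamma ai * x ^ (ai - 1) * Real.exp (-bi * x)) *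
          Real.sqrt (bj ^ aj / Real.Gamma aj * x ^ (aj - 1) * Real.exp (-bj * x))) =
      bi ^ (ai / 2) * bj ^ (aj / 2) /
          (Real.sqrt (Real.Gamma ai) * Real.sqrt (Real.Gamma aj)) *
        (Real.Gamma ((ai + aj) / 2) / ((bi + bj) / 2) ^ ((ai + aj) / 2)) := by
  set C : ℝ := bi ^ (ai / 2) * bj ^ (aj / 2) /
      (Real.sqrt (Real.Gamma ai) * Real.sqrt (Real.Gamma aj)) with hC
  have key : ∀ x ∈ Set.Ioi (0 : ℝ),
      Real.sqrt (bi ^ ai / Real.Gamma ai * x ^ (ai - 1) * Real.exp (-bi * x)) *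
        Real.sqrt (bj ^ aj / Real.Gamma aj * x ^ (aj - 1) * Real.exp (-bj * x)) =
      C * (x ^ ((ai + aj) / 2 - 1) * Real.exp (-((bi + bj) / 2 * x))) := by
    intro x hx
    rw [Set.mem_Ioi] at hx
    have h1 : ∀ a b : ℝ, 0 < a → 0 < b →
        Real.sqrt (b ^ a / Real.Gamma a * x ^ (a - 1) * Real.exp (-b * x)) =
        b ^ (a / 2) / Real.sqrt (Real.Gamma a) * x ^ ((a - 1) / 2) *
          Real.exp (-b * x / 2) := by
      intro a b ha hb
      rw [Real.sqrt_mul (by positivity), Real.sqrt_mul (by positivity),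
        Real.sqrt_div (by positivity), Real.exp_half]
      congr 2
      · rw [Real.sqrt_eq_rpow, ← Real.rpow_mul hb.le]
        ring_nf
      · rw [Real.sqrt_eq_rpow, ← Real.rpow_mul hx.le]
        ring_nf
    rw [h1 ai bi hai hbi, h1 aj bj haj hbj]
    have hxa : x ^ ((ai - 1) / 2) * x ^ ((aj - 1) / 2) = x ^ ((ai + aj) / 2 - 1) := by
      rw [← Real.rpow_add hx]; ring_nf
    have hxe : Real.exp (-bi * x / 2) * Real.exp (-bj * x / 2) =
        Real.exp (-((bi + bj) / 2 * x)) := by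
      rw [← Real.exp_add]; ring_nf
    calc bi ^ (ai / 2) / Real.sqrt (Real.Gamma ai) * x ^ ((ai - 1) / 2) *
          Real.exp (-bi * x / 2) *
        (bj ^ (aj / 2) / Real.sqrt (Real.Gamma aj) * x ^ ((aj - 1) / 2) *
          Real.exp (-bj * x / 2))
        = C * ((x ^ ((ai - 1) / 2) * x ^ ((aj - 1) / 2)) *
            (Real.exp (-bi * x / 2) * Real.exp (-bj * x / 2))) := by
          rw [hC]; ring
      _ = _ := by rw [hxa, hxe]
  rw [MeasureTheory.setIntegral_congr_fun measurableSet_Ioi key,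
    MeasureTheory.integral_const_mul,
    Real.integral_rpow_mul_exp_neg_mul_Ioi (by positivity) (by positivity)]
  congr 1
  rw [one_div, Real.inv_rpow (by positivity), mul_comm, ← div_eq_mul_inv]
end

section
/- Let a_i, b_i, a_j, b_j > 0 with a_i + a_j > 4. Let ψ_i(x) = (b_i^{a_i/2}/Γ(a_i)^{1/2}) x^{(a_i−1)/2} e^{−b_i x/2} on (0,∞), with derivative ψ_i'(x) = ( (a_i−1)/(2x) − b_i/2 ) ψ_i(x), and similarly for ψ_j. Then, writing C = b_i^{a_i/2} b_j^{a_j/2} / (Γ(a_i)^{1/2} Γ(a_j)^{1/2}), s = (a_i+a_j)/2 and λ = (b_i+b_j)/2, one has ∫₀^∞ ψ_i'(x) ψ_j'(x) dx = C [ ((a_i−1)(a_j−1)/4) · Γ(s−2)/λ^{s−2} + (b_i b_j/4) · Γ(s)/λ^{s} − ( (a_i−1) b_j/4 + (a_j−1) b_i/4 ) · Γ(s−1)/λ^{s−1} ]. -/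
open Set Real MeasureTheory


/-- Inner product of the derivatives of square roots of two Gamma densities, with
`C = bᵢ^{aᵢ/2} bⱼ^{aⱼ/2}/(Γ(aᵢ)^{1/2} Γ(aⱼ)^{1/2})`, `s = (aᵢ+aⱼ)/2` and
`λ = (bᵢ+bⱼ)/2`:
`∫₀^∞ ψᵢ' ψⱼ' = C [ ((aᵢ−1)(aⱼ−1)/4) Γ(s−2)/λ^{s−2} + (bᵢ bⱼ/4) Γ(s)/λ^{s}
  − ((aᵢ−1) bⱼ/4 + (aⱼ−1) bᵢ/4) Γ(s−1)/λ^{s−1} ]`. -/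
theorem gamma_sqrt_density_deriv_inner_product (ai bi aj bj : ℝ)
    (hai : 0 < ai) (hbi : 0 < bi) (haj : 0 < aj) (hbj : 0 < bj)
    (ha4 : 4 < ai + aj)
    (ψi ψj ψi' ψj' : ℝ → ℝ)
    (hψi : ψi = fun x =>
      bi ^ (ai / 2) / Real.sqrt (Real.Gamma ai) * x ^ ((ai - 1) / 2) * Real.exp (-bi * x / 2))
    (hψj : ψj = fun x =>
      bj ^ (aj / 2) / Real.sqrt (Real.Gamma aj) * x ^ ((aj - 1) / 2) * Real.exp (-bj * x / 2))
    (hψi' : ψi' = fun x => ((ai - 1) / (2 * x) - bi / 2) * ψi x)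
    (hψj' : ψj' = fun x => ((aj - 1) / (2 * x) - bj / 2) * ψj x)
    (C s lam : ℝ)
    (hC : C = bi ^ (ai / 2) * bj ^ (aj / 2) /
      (Real.sqrt (Real.Gamma ai) * Real.sqrt (Real.Gamma aj)))
    (hs : s = (ai + aj) / 2) (hlam : lam = (bi + bj) / 2) :
    (∫ x in Set.Ioi (0 : ℝ), ψi' x * ψj' x) =
      C * ((ai - 1) * (aj - 1) / 4 * (Real.Gamma (s - 2) / lam ^ (s - 2)) +
        bi * bj / 4 * (Real.Gamma s / lam ^ s) -
        ((ai - 1) * bj / 4 + (aj - 1) * bi / 4) * (Real.Gamma (s - 1) / lam ^ (s - 1))) := by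
  have hlam0 : 0 < lam := by rw [hlam]; linarith
  have hs2 : 2 < s := by rw [hs]; linarith
  set k1 : ℝ := (ai - 1) * (aj - 1) / 4 with hk1
  set k2 : ℝ := bi * bj / 4 with hk2
  set k3 : ℝ := (ai - 1) * bj / 4 + (aj - 1) * bi / 4 with hk3
  -- integrability
  have hInt : ∀ t : ℝ, 0 < t →
      IntegrableOn (fun x : ℝ => x ^ (t - 1) * Real.exp (-(lam * x))) (Ioi 0) := by
    intro t ht
    have := integrableOn_rpow_mul_exp_neg_mul_rpow (s := t - 1) (p := 1) (b := lam)
      (by linarith) zero_lt_one hlam0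
    refine this.congr_fun (fun x hx => ?_) measurableSet_Ioi
    simp only [Real.rpow_one]; ring_nf
  have hI : ∀ t : ℝ, 0 < t →
      ∫ x in Ioi (0:ℝ), x ^ (t - 1) * Real.exp (-(lam * x)) = Real.Gamma t / lam ^ t := by
    intro t ht
    rw [integral_rpow_mul_exp_neg_mul_Ioi ht hlam0, Real.div_rpow (by norm_num) hlam0.le,
      Real.one_rpow]
    ring
  -- pointwise identity
  have hpt : ∀ x ∈ Ioi (0:ℝ), ψi' x * ψj' x =
      C * (k1 * (x ^ (s - 2 - 1) * Real.exp (-(lam * x))) +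
        k2 * (x ^ (s - 1) * Real.exp (-(lam * x))) -
        k3 * (x ^ (s - 1 - 1) * Real.exp (-(lam * x)))) := by
    intro x hx
    rw [mem_Ioi] at hx
    rw [hψi', hψj', hψi, hψj]
    have hx0 : x ≠ 0 := ne_of_gt hx
    have hxs1 : x ^ (s - 1) = x ^ (s - 2 - 1) * x * x := by
      rw [← Real.rpow_add_one hx0, ← Real.rpow_add_one hx0]; ring_nf
    have hxs2 : x ^ (s - 1 - 1) = x ^ (s - 2 - 1) * x := by
      rw [← Real.rpow_add_one hx0]; ring_nf
    have hxij : x ^ ((ai - 1) / 2) * x ^ ((aj - 1) / 2) = x ^ (s - 1) := by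
      rw [← Real.rpow_add hx, hs]; ring_nf
    have hexp : Real.exp (-bi * x / 2) * Real.exp (-bj * x / 2) = Real.exp (-(lam * x)) := by
      rw [← Real.exp_add, hlam]; ring_nf
    simp only []
    calc ((ai - 1) / (2 * x) - bi / 2) *
          (bi ^ (ai / 2) / Real.sqrt (Real.Gamma ai) * x ^ ((ai - 1) / 2) *
            Real.exp (-bi * x / 2)) *
        (((aj - 1) / (2 * x) - bj / 2) *
          (bj ^ (aj / 2) / Real.sqrt (Real.Gamma aj) * x ^ ((aj - 1) / 2) *
            Real.exp (-bj * x / 2)))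
        = C * (((ai - 1) / (2 * x) - bi / 2) * ((aj - 1) / (2 * x) - bj / 2) * x ^ (s - 1)) *
            Real.exp (-(lam * x)) := by
          rw [hC, ← hexp, ← hxij]; ring
      _ = _ := by
          rw [hxs1, hxs2]
          field_simp
          ring
  rw [setIntegral_congr_fun measurableSet_Ioi hpt]
  have h1 := hInt (s - 2) (by linarith)
  have h2 := hInt s (by linarith)
  have h3 := hInt (s - 1) (by linarith)
  rw [MeasureTheory.integral_const_mul]
  have hadd : Integrable (fun x : ℝ => k1 * (x ^ (s - 2 - 1) * Real.exp (-(lam * x))) +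
      k2 * (x ^ (s - 1) * Real.exp (-(lam * x)))) (volume.restrict (Ioi 0)) :=
    (h1.const_mul k1).add (h2.const_mul k2)
  rw [MeasureTheory.integral_sub hadd (h3.const_mul k3),
    MeasureTheory.integral_add (h1.const_mul k1) (h2.const_mul k2),
    MeasureTheory.integral_const_mul, MeasureTheory.integral_const_mul,
    MeasureTheory.integral_const_mul]
  rw [hI (s-2) (by linarith), show s - 1 - 1 = (s-1) - 1 by ring, hI (s-1) (by linarith)]
  rw [show (fun x : ℝ => x ^ (s - 1) * Real.exp (-(lam * x))) = fun x : ℝ => x ^ (s - 1) * Real.exp (-(lam * x)) from rfl, hI s (by linarith)]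
end
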